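/- If f and g are barcodes with C(f^∧q) = C(g^∧q) for every integer q ≥ 1, then for every integer p ≥ 1 one has B(f^∧p) = B(g^∧p) and D(f^∧p) = D(g^∧p). That is, the birth and death series of all exterior powers of a barcode are determined by its exterior critical series. -/

import Mathlib

/-!
Because lifespans are positive, no bar of `f^∧q` dies at or below the least birth grade of
`f^∧q`, which is the sum `m_q` of the `q` smallest birth grades of `f`. Hence `m_q` is the least
grade where `C(f^∧q)` is nonzero, and `C(f^∧q) = 0` exactly when `q` exceeds the number of bars.
So the exterior critical series determine the number of bars and all the `m_q`, hence the
multiset of birth grades, which determines every `B(f^∧p)`; finally `D = B - C`.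
-/

noncomputable section

/-- A barcode: a finite multiset of bars `(α, ℓ)` with positive lifespan `ℓ`. -/
def IsBarcode (f : Multiset (ℝ × ℝ)) : Prop := ∀ b ∈ f, (0 : ℝ) < b.2

/-- The `p`-th exterior power of a barcode: each `p`-element sub-multiset `s`
contributes the bar whose birth grade is the sum of the birth grades in `s`
and whose lifespan is the minimum of the lifespans in `s`. -/
noncomputable def extPow (f : Multiset (ℝ × ℝ)) (p : ℕ) : Multiset (ℝ × ℝ) :=
  (Multiset.powersetCard p f).map
    (fun s => ((s.map Prod.fst).sum, sInf {x : ℝ | x ∈ s.map Prod.snd}))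

/-- The birth series `B(f) = Σ_{(α,ℓ)∈f} x^α`. -/
noncomputable def birthSeries (f : Multiset (ℝ × ℝ)) : ℝ →₀ ℤ :=
  (f.map (fun b => Finsupp.single b.1 (1 : ℤ))).sum

/-- The death series `D(f) = Σ_{(α,ℓ)∈f} x^{α+ℓ}`. -/
noncomputable def deathSeries (f : Multiset (ℝ × ℝ)) : ℝ →₀ ℤ :=
  (f.map (fun b => Finsupp.single (b.1 + b.2) (1 : ℤ))).sum

/-- The critical series `C(f) = B(f) − D(f)`. -/
noncomputable def critSeries (f : Multiset (ℝ × ℝ)) : ℝ →₀ ℤ :=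
  birthSeries f - deathSeries f

/-- The lifespan series `L(f) = Σ_{(α,ℓ)∈f} x^ℓ`. -/
noncomputable def lifespanSeries (f : Multiset (ℝ × ℝ)) : ℝ →₀ ℤ :=
  (f.map (fun b => Finsupp.single b.2 (1 : ℤ))).sum

/-- The drift `Δ(f) = Σ_{(α,ℓ)∈f} α`. -/
noncomputable def drift (f : Multiset (ℝ × ℝ)) : ℝ :=
  (f.map Prod.fst).sum

/-- The moment `μ(P) = Σ_β P(β)·β`. -/
noncomputable def moment (P : ℝ →₀ ℤ) : ℝ :=
  P.sum fun β n => (n : ℝ) * β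

/-- The second moment `μ₂(P) = Σ_β P(β)·β²`. -/
noncomputable def moment2 (P : ℝ →₀ ℤ) : ℝ :=
  P.sum fun β n => (n : ℝ) * β ^ 2

end

open Multiset

section SumSmallest

variable {α : Type*} [LinearOrder α]

theorem List.Pairwise.sum_take_card_le_sum [AddCommMonoid α] [IsOrderedAddMonoid α]
    {l : List α} (hl : l.Pairwise (· ≤ ·)) {t : Multiset α} (ht : t ≤ ↑l) :
    (l.take (card t)).sum ≤ t.sum := by
  induction l generalizing t with
  | nil => simp [le_zero.mp ht]
  | cons a l ih =>
    obtain ⟨ha, hl⟩ := List.pairwise_cons.mp hl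
    obtain rfl | ⟨x, hx⟩ := t.empty_or_exists_mem
    · simp
    have hxa : a ≤ x := by
      rcases List.mem_cons.mp (mem_of_le ht hx) with rfl | hxl
      exacts [le_rfl, ha x hxl]
    obtain ⟨y, hy, hay, hle⟩ : ∃ y ∈ t, a ≤ y ∧ t.erase y ≤ ↑l := by
      by_cases hat : a ∈ t
      · exact ⟨a, hat, le_rfl, erase_le_iff_le_cons.mpr ht⟩
      · have htl : t ≤ ↑l := erase_of_notMem hat ▸ erase_le_iff_le_cons.mpr ht
        exact ⟨x, hx, hxa, (erase_le x t).trans htl⟩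
    calc (List.take (card t) (a :: l)).sum = a + (l.take (card (t.erase y))).sum := by
          rw [← card_erase_add_one hy, List.take_succ_cons, List.sum_cons]
      _ ≤ y + (t.erase y).sum := add_le_add hay (ih hl hle)
      _ = t.sum := Multiset.sum_erase hy

def Multiset.sumSmallest [AddCommMonoid α] (s : Multiset α) (q : ℕ) : α :=
  ((s.sort (· ≤ ·)).take q).sum

@[simp]
theorem Multiset.sumSmallest_zero [AddCommMonoid α] (s : Multiset α) : s.sumSmallest 0 = 0 := by
  simp [sumSmallest]

theorem Multiset.sumSmallest_card_le_sum [AddCommMonoid α] [IsOrderedAddMonoid α]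
    {s t : Multiset α} (hts : t ≤ s) : s.sumSmallest (card t) ≤ t.sum :=
  (s.pairwise_sort _).sum_take_card_le_sum (by rwa [sort_eq])

theorem Multiset.exists_le_card_eq_sum_eq_sumSmallest [AddCommMonoid α] {s : Multiset α} {q : ℕ}
    (hq : q ≤ card s) : ∃ t ≤ s, card t = q ∧ t.sum = s.sumSmallest q := by
  refine ⟨↑((s.sort (· ≤ ·)).take q), ?_, by simpa using hq, sum_coe _⟩
  conv_rhs => rw [← s.sort_eq (· ≤ ·)]
  exact coe_le.mpr (List.take_sublist _ _).subperm

theorem Multiset.eq_of_sumSmallest_eq [AddCancelCommMonoid α] {s t : Multiset α}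
    (hcard : card s = card t) (h : ∀ q ≤ card s, s.sumSmallest q = t.sumSmallest q) :
    s = t := by
  rw [← s.sort_eq (· ≤ ·), ← t.sort_eq (· ≤ ·)]
  congr 1
  exact List.eq_of_sum_take_eq (by simpa using hcard) fun q hq => h q (by simpa using hq)

end SumSmallest

theorem Multiset.sum_map_single_one_apply {ι γ : Type*} [DecidableEq γ] (s : Multiset ι)
    (k : ι → γ) (c : γ) :
    (s.map fun i => Finsupp.single (k i) (1 : ℤ)).sum c = s.countP (k · = c) := by
  induction s using Multiset.induction_on with
  | empty => simp
  | cons i s ih => simp [ih, Finsupp.single_apply, countP_cons, add_comm]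

theorem birthSeries_apply (f : Multiset (ℝ × ℝ)) (β : ℝ) :
    birthSeries f β = f.countP (·.1 = β) :=
  f.sum_map_single_one_apply _ β

theorem deathSeries_apply (f : Multiset (ℝ × ℝ)) (β : ℝ) :
    deathSeries f β = f.countP (fun b => b.1 + b.2 = β) :=
  f.sum_map_single_one_apply _ β

theorem deathSeries_eq_birthSeries_sub_critSeries (f : Multiset (ℝ × ℝ)) :
    deathSeries f = birthSeries f - critSeries f :=
  (sub_sub_cancel _ _).symm

theorem birthSeries_eq_of_map_fst_eq {f g : Multiset (ℝ × ℝ)}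
    (h : f.map Prod.fst = g.map Prod.fst) : birthSeries f = birthSeries g := by
  simp only [birthSeries, ← Function.comp_apply (f := fun β => Finsupp.single β (1 : ℤ)),
    ← map_map, h]

theorem critSeries_apply (f : Multiset (ℝ × ℝ)) (β : ℝ) :
    critSeries f β = f.countP (·.1 = β) - f.countP (fun b => b.1 + b.2 = β) := by
  rw [critSeries, Finsupp.sub_apply, birthSeries_apply, deathSeries_apply]

theorem IsBarcode.isLeast_support_critSeries {g : Multiset (ℝ × ℝ)} (hg : IsBarcode g)
    {m : ℝ} (hm : m ∈ g.map Prod.fst) (hle : ∀ b ∈ g, m ≤ b.1) :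
    IsLeast ↑(critSeries g).support m := by
  have no_death : ∀ β ≤ m, g.countP (fun b => b.1 + b.2 = β) = 0 := fun β hβ =>
    countP_eq_zero.mpr fun b hb => by linarith [hle b hb, hg b hb]
  refine ⟨?_, fun β hβ => ?_⟩
  · have : 0 < g.countP (·.1 = m) := countP_pos.mpr (by simpa using hm)
    rw [Finset.mem_coe, Finsupp.mem_support_iff, critSeries_apply, no_death m le_rfl]
    omega
  · by_contra! hβm
    have no_birth : g.countP (·.1 = β) = 0 :=
      countP_eq_zero.mpr fun b hb => by linarith [hle b hb]
    rw [Finset.mem_coe, Finsupp.mem_support_iff, critSeries_apply, no_birth,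
      no_death β hβm.le] at hβ
    exact hβ rfl

section ExtPow

variable {f : Multiset (ℝ × ℝ)} {q : ℕ}

theorem IsBarcode.extPow (hf : IsBarcode f) (hq : 1 ≤ q) : IsBarcode (extPow f q) := by
  intro b hb
  obtain ⟨s, hs, rfl⟩ := mem_map.mp hb
  obtain ⟨hsf, hcard⟩ := mem_powersetCard.mp hs
  have hne : {x : ℝ | x ∈ s.map Prod.snd}.Nonempty := by
    obtain ⟨c, hc⟩ := card_pos_iff_exists_mem.mp (show 0 < card s by omega)
    exact ⟨c.2, mem_map_of_mem _ hc⟩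
  obtain ⟨c, hc, hmin⟩ := mem_map.mp (hne.csInf_mem (s.map Prod.snd).finite_toSet)
  exact hmin ▸ hf c (mem_of_le hsf hc)

theorem map_fst_extPow (f : Multiset (ℝ × ℝ)) (q : ℕ) :
    (extPow f q).map Prod.fst = ((f.map Prod.fst).powersetCard q).map Multiset.sum := by
  rw [extPow, powersetCard_map, map_map, map_map]
  rfl

theorem critSeries_extPow_of_card_lt (h : card f < q) : critSeries (extPow f q) = 0 := by
  simp [critSeries, birthSeries, deathSeries, extPow, powersetCard_eq_empty q h]

theorem isLeast_support_critSeries_extPow (hf : IsBarcode f) (hq : 1 ≤ q) (hqf : q ≤ card f) :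
    IsLeast ↑(critSeries (extPow f q)).support ((f.map Prod.fst).sumSmallest q) := by
  refine (hf.extPow hq).isLeast_support_critSeries ?_ fun b hb => ?_
  · obtain ⟨t, hts, rfl, hsum⟩ :=
      exists_le_card_eq_sum_eq_sumSmallest (s := f.map Prod.fst) (q := q) (by rwa [card_map])
    rw [map_fst_extPow, ← hsum]
    exact mem_map_of_mem _ (mem_powersetCard.mpr ⟨hts, rfl⟩)
  · obtain ⟨t, ht, hbt⟩ := mem_map.mp (map_fst_extPow f q ▸ mem_map_of_mem Prod.fst hb)
    obtain ⟨hts, rfl⟩ := mem_powersetCard.mp ht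
    exact hbt ▸ sumSmallest_card_le_sum hts

end ExtPow

theorem card_le_card_of_critSeries_extPow_eq {f g : Multiset (ℝ × ℝ)} (hg : IsBarcode g)
    (h : ∀ q : ℕ, 1 ≤ q → critSeries (extPow f q) = critSeries (extPow g q)) :
    card g ≤ card f := by
  by_contra! hlt
  have := (isLeast_support_critSeries_extPow hg (q := card g) (by omega) le_rfl).1
  rw [← h _ (by omega), critSeries_extPow_of_card_lt hlt] at this
  simp at this

/-- the birth and death series of all exterior powers are determined by
the exterior critical series. -/
theorem birth_death_determined_by_extCrit
    (f g : Multiset (ℝ × ℝ)) (hf : IsBarcode f) (hg : IsBarcode g)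
    (h : ∀ q : ℕ, 1 ≤ q → critSeries (extPow f q) = critSeries (extPow g q)) :
    ∀ p : ℕ, 1 ≤ p →
      birthSeries (extPow f p) = birthSeries (extPow g p) ∧
      deathSeries (extPow f p) = deathSeries (extPow g p) := by
  intro p hp
  have hcard : card f = card g := le_antisymm
    (card_le_card_of_critSeries_extPow_eq hf fun q hq => (h q hq).symm)
    (card_le_card_of_critSeries_extPow_eq hg h)
  have hbirths : f.map Prod.fst = g.map Prod.fst := by
    refine eq_of_sumSmallest_eq (by simp [hcard]) fun q hq => ?_
    rcases Nat.eq_zero_or_pos q with rfl | hq1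
    · simp
    rw [card_map] at hq
    exact (isLeast_support_critSeries_extPow hf hq1 hq).unique
      (h q hq1 ▸ isLeast_support_critSeries_extPow hg hq1 (hcard ▸ hq))
  have hB : birthSeries (extPow f p) = birthSeries (extPow g p) :=
    birthSeries_eq_of_map_fst_eq (by rw [map_fst_extPow, map_fst_extPow, hbirths])
  refine ⟨hB, ?_⟩
  rw [deathSeries_eq_birthSeries_sub_critSeries, deathSeries_eq_birthSeries_sub_critSeries, hB,
    h p hp]
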